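/- arXiv:math/9206201 — 2 statements merged into one kernel-verified Lean document; each statement's English description precedes it below -/
import Mathlib

section
/- Let X = Σ_{n=1}^N εₙ xₙ be a finite Rademacher series in a Banach space E. For every t > 0, P(‖X‖ > 2·E‖X‖ + 3·K((xₙ)_{n=1}^N, t; ℓ₁^w(E), ℓ₂^w(E))) ≤ 4·e^{−t²/8}. -/
open MeasureTheory ProbabilityTheory

/-- The weak-`ℓ₁` norm of a finite sequence: `ℓ₁^w((xₙ)) = sup_{‖x*‖≤1} ∑ |x*(xₙ)|`. -/
noncomputable def l1wFin {E : Type*} [NormedAddCommGroup E] [NormedSpace ℝ E]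
    {N : ℕ} (y : Fin N → E) : ℝ :=
  ⨆ f : {f : E →L[ℝ] ℝ // ‖f‖ ≤ 1}, ∑ n, |f.1 (y n)|

/-- The weak-`ℓ₂` norm of a finite sequence:
`ℓ₂^w((xₙ)) = sup_{‖x*‖≤1} (∑ |x*(xₙ)|²)^{1/2}`. -/
noncomputable def l2wFin {E : Type*} [NormedAddCommGroup E] [NormedSpace ℝ E]
    {N : ℕ} (z : Fin N → E) : ℝ :=
  ⨆ f : {f : E →L[ℝ] ℝ // ‖f‖ ≤ 1}, (∑ n, (f.1 (z n)) ^ 2) ^ ((1 : ℝ) / 2)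

/-- The K-functional of the couple `(ℓ₁^w(E), ℓ₂^w(E))` for a finite sequence. -/
noncomputable def KwCouple {E : Type*} [NormedAddCommGroup E] [NormedSpace ℝ E]
    {N : ℕ} (x : Fin N → E) (t : ℝ) : ℝ :=
  sInf {r : ℝ | ∃ y z : Fin N → E, (∀ n, x n = y n + z n) ∧
    r = l1wFin y + t * l2wFin z}

/-- `(εₙ)` is a (finite) Rademacher sequence. -/
def IsRademacherFin {Ω : Type*} [MeasurableSpace Ω] (μ : Measure Ω) {N : ℕ}
    (ε : Fin N → Ω → ℝ) : Prop :=
  (∀ n, Measurable (ε n)) ∧ iIndepFun ε μ ∧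
    ∀ n, μ {ω | ε n ω = 1} = 1 / 2 ∧ μ {ω | ε n ω = -1} = 1 / 2

/-! On the event of full measure where every `εₙ = ±1`, the series is a function of
the sign pattern, which is uniformly distributed on the cube `{±1}ᴺ`. For a
decomposition `x = y + z`, `‖∑ εₙ yₙ‖ ≤ ℓ₁ʷ(y)` pointwise, so it suffices to bound
the tail of `‖∑ εₙ zₙ‖` above `2 E‖∑ εₙ zₙ‖ + 3 t ℓ₂ʷ(z)` and then let
`ℓ₁ʷ(y) + t ℓ₂ʷ(z)` approach `K(x, t)`.

The map `a ↦ ‖∑ aₙ zₙ‖` is convex and `ℓ₂ʷ(z)`-Lipschitz for the Euclidean norm.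
By Markov, the set `A` of sign vectors where it is at most twice its mean holds
half of the cube; by Jensen, a sign vector where it exceeds `2 E + 3 t ℓ₂ʷ(z)` is
at Euclidean distance at least `3t` from the convex hull of `A`. Talagrand's
convex distance inequality `∑ₓ exp(d(x, conv A)² / 72) ≤ 4ᴺ / |A|`, proved by
induction on `N`, then bounds the number of such vectors by `2 · 2ᴺ e^{-t²/8}`. -/

open scoped ENNReal

noncomputable section

namespace RademacherTail

section Cube

variable {n : ℕ}

def boolSign (b : Bool) : ℝ := if b then 1 else -1

lemma abs_boolSign (b : Bool) : |boolSign b| = 1 := by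
  cases b <;> norm_num [boolSign]

lemma boolSign_sub_sq_le (b c : Bool) : (boolSign b - boolSign c) ^ 2 ≤ 4 := by
  cases b <;> cases c <;> norm_num [boolSign]

def IsWeight (A : Finset (Fin n → Bool)) (w : (Fin n → Bool) → ℝ) : Prop :=
  (∀ v, 0 ≤ w v) ∧ (∀ v, v ∉ A → w v = 0) ∧ ∑ v, w v = 1

def barycenter (w : (Fin n → Bool) → ℝ) (i : Fin n) : ℝ := ∑ v, w v * boolSign (v i)

def sqDist (w : (Fin n → Bool) → ℝ) (x : Fin n → Bool) : ℝ :=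
  ∑ i, (boolSign (x i) - barycenter w i) ^ 2

/-- Talagrand's convex distance (squared): the squared Euclidean distance from the sign vector
of `x` to the convex hull of the sign vectors of the points of `A`. -/
def convexSqDist (A : Finset (Fin n → Bool)) (x : Fin n → Bool) : ℝ :=
  sInf {r | ∃ w, IsWeight A w ∧ r = sqDist w x}

lemma sqDist_nonneg (w : (Fin n → Bool) → ℝ) (x : Fin n → Bool) : 0 ≤ sqDist w x :=
  Finset.sum_nonneg fun _ _ => sq_nonneg _

lemma isWeight_indicator {A : Finset (Fin n → Bool)} {a : Fin n → Bool} (ha : a ∈ A) :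
    IsWeight A (fun v => if v = a then 1 else 0) :=
  ⟨fun v => by positivity, fun v hv => if_neg (ne_of_mem_of_not_mem ha hv).symm, by simp⟩

lemma convexSqDist_le {A : Finset (Fin n → Bool)} {w : (Fin n → Bool) → ℝ}
    (hw : IsWeight A w) (x : Fin n → Bool) : convexSqDist A x ≤ sqDist w x :=
  csInf_le ⟨0, by rintro r ⟨w, -, rfl⟩; exact sqDist_nonneg w x⟩ ⟨w, hw, rfl⟩

lemma le_convexSqDist {A : Finset (Fin n → Bool)} (hA : A.Nonempty) {x : Fin n → Bool} {r : ℝ}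
    (hr : ∀ w, IsWeight A w → r ≤ sqDist w x) : r ≤ convexSqDist A x := by
  obtain ⟨a, ha⟩ := hA
  exact le_csInf ⟨_, _, isWeight_indicator ha, rfl⟩ (by rintro _ ⟨w, hw, rfl⟩; exact hr w hw)

lemma exists_isWeight_sqDist_lt {A : Finset (Fin n → Bool)} (hA : A.Nonempty)
    (x : Fin n → Bool) {δ : ℝ} (hδ : 0 < δ) :
    ∃ w, IsWeight A w ∧ sqDist w x < convexSqDist A x + δ := by
  obtain ⟨a, ha⟩ := hA
  obtain ⟨r, ⟨w, hw, rfl⟩, hr⟩ := Real.lt_sInf_add_pos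
    (s := {r | ∃ w, IsWeight A w ∧ r = sqDist w x}) ⟨_, _, isWeight_indicator ha, rfl⟩ hδ
  exact ⟨w, hw, hr⟩

lemma isWeight_convexComb {A : Finset (Fin n → Bool)} {w₁ w₂ : (Fin n → Bool) → ℝ}
    (h₁ : IsWeight A w₁) (h₂ : IsWeight A w₂) {l : ℝ} (h0 : 0 ≤ l) (h1 : l ≤ 1) :
    IsWeight A (fun v => l * w₁ v + (1 - l) * w₂ v) := by
  refine ⟨fun v => ?_, fun v hv => ?_, ?_⟩
  · exact add_nonneg (mul_nonneg h0 (h₁.1 v)) (mul_nonneg (sub_nonneg.2 h1) (h₂.1 v))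
  · simp [h₁.2.1 v hv, h₂.2.1 v hv]
  · rw [Finset.sum_add_distrib, ← Finset.mul_sum, ← Finset.mul_sum, h₁.2.2, h₂.2.2]; ring

lemma barycenter_convexComb (w₁ w₂ : (Fin n → Bool) → ℝ) (l : ℝ) (i : Fin n) :
    barycenter (fun v => l * w₁ v + (1 - l) * w₂ v) i =
      l * barycenter w₁ i + (1 - l) * barycenter w₂ i := by
  simp only [barycenter, add_mul, mul_assoc, Finset.sum_add_distrib, ← Finset.mul_sum]

lemma sum_cube_cons {M : Type*} [AddCommMonoid M] (b : Bool) (g : (Fin (n + 1) → Bool) → M) :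
    ∑ u, g u = ∑ v, g (Fin.cons b v) + ∑ v, g (Fin.cons (!b) v) := by
  rw [← (Fin.consEquiv fun _ => Bool).sum_comp, Fintype.sum_prod_type, Fintype.sum_bool]
  cases b
  · exact add_comm _ _
  · rfl

def slice (A : Finset (Fin (n + 1) → Bool)) (b : Bool) : Finset (Fin n → Bool) :=
  Finset.univ.filter fun v => Fin.cons b v ∈ A

lemma card_eq_card_slice_add (A : Finset (Fin (n + 1) → Bool)) (b : Bool) :
    A.card = (slice A b).card + (slice A !b).card := by
  simp only [slice, Finset.card_filter]
  rw [← sum_cube_cons b fun u => if u ∈ A then 1 else 0, ← Finset.card_filter]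
  simp

def liftWeight (b : Bool) (w : (Fin n → Bool) → ℝ) : (Fin (n + 1) → Bool) → ℝ :=
  fun u => if u 0 = b then w (Fin.tail u) else 0

lemma liftWeight_cons (b c : Bool) (w : (Fin n → Bool) → ℝ) (v : Fin n → Bool) :
    liftWeight b w (Fin.cons c v) = if c = b then w v else 0 := by
  simp [liftWeight]

lemma isWeight_liftWeight {A : Finset (Fin (n + 1) → Bool)} {b : Bool}
    {w : (Fin n → Bool) → ℝ} (hw : IsWeight (slice A b) w) : IsWeight A (liftWeight b w) := by
  obtain ⟨h0, hsupp, hsum⟩ := hw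
  refine ⟨fun u => ?_, fun u hu => ?_, ?_⟩
  · unfold liftWeight; split_ifs <;> simp [h0]
  · unfold liftWeight
    split_ifs with h
    · refine hsupp _ fun hmem => hu ?_
      simpa [slice, ← h] using hmem
    · rfl
  · rw [sum_cube_cons b]
    simp [liftWeight_cons, hsum]

lemma barycenter_liftWeight_zero (b : Bool) {w : (Fin n → Bool) → ℝ} (hsum : ∑ v, w v = 1) :
    barycenter (liftWeight b w) 0 = boolSign b := by
  rw [barycenter, sum_cube_cons b]
  simp [liftWeight_cons, ← Finset.sum_mul, hsum]

lemma barycenter_liftWeight_succ (b : Bool) (w : (Fin n → Bool) → ℝ) (i : Fin n) :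
    barycenter (liftWeight b w) i.succ = barycenter w i := by
  rw [barycenter, sum_cube_cons b]
  simp [liftWeight_cons, barycenter]

lemma convexSqDist_cons_le {A : Finset (Fin (n + 1) → Bool)} {b : Bool}
    (hb : (slice A b).Nonempty) (c : Bool) (x : Fin n → Bool) :
    convexSqDist A (Fin.cons c x) ≤
      (boolSign c - boolSign b) ^ 2 + convexSqDist (slice A b) x := by
  refine le_of_forall_pos_le_add fun δ hδ => ?_
  obtain ⟨w, hw, hlt⟩ := exists_isWeight_sqDist_lt hb x hδ
  have hsq : sqDist (liftWeight b w) (Fin.cons c x) =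
      (boolSign c - boolSign b) ^ 2 + sqDist w x := by
    simp [sqDist, Fin.sum_univ_succ, barycenter_liftWeight_zero b hw.2.2,
      barycenter_liftWeight_succ]
  linarith [convexSqDist_le (isWeight_liftWeight hw) (Fin.cons c x)]

lemma convexSqDist_cons_le_convexComb {A : Finset (Fin (n + 1) → Bool)} {b : Bool}
    (hb : (slice A b).Nonempty) (hb' : (slice A !b).Nonempty) {l : ℝ}
    (h0 : 0 ≤ l) (h1 : l ≤ 1) (x : Fin n → Bool) :
    convexSqDist A (Fin.cons b x) ≤
      l * convexSqDist (slice A b) x + (1 - l) * convexSqDist (slice A !b) x + 4 * (1 - l) ^ 2 := by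
  have h1' : 0 ≤ 1 - l := by linarith
  refine le_of_forall_pos_le_add fun δ hδ => ?_
  obtain ⟨w₁, hw₁, hlt₁⟩ := exists_isWeight_sqDist_lt hb x hδ
  obtain ⟨w₂, hw₂, hlt₂⟩ := exists_isWeight_sqDist_lt hb' x hδ
  set w := fun u => l * liftWeight b w₁ u + (1 - l) * liftWeight (!b) w₂ u
  have hw : IsWeight A w :=
    isWeight_convexComb (isWeight_liftWeight hw₁) (isWeight_liftWeight hw₂) h0 h1
  have hfirst : (boolSign b - barycenter w 0) ^ 2 = 4 * (1 - l) ^ 2 := by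
    rw [barycenter_convexComb, barycenter_liftWeight_zero b hw₁.2.2,
      barycenter_liftWeight_zero _ hw₂.2.2]
    cases b <;> norm_num [boolSign] <;> ring
  have hrest : ∀ i, (boolSign (x i) - barycenter w i.succ) ^ 2 ≤
      l * (boolSign (x i) - barycenter w₁ i) ^ 2 +
        (1 - l) * (boolSign (x i) - barycenter w₂ i) ^ 2 := by
    intro i
    rw [barycenter_convexComb, barycenter_liftWeight_succ, barycenter_liftWeight_succ]
    nlinarith [mul_nonneg (mul_nonneg h0 h1') (sq_nonneg (barycenter w₁ i - barycenter w₂ i))]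
  have hsq : sqDist w (Fin.cons b x) ≤
      4 * (1 - l) ^ 2 + (l * sqDist w₁ x + (1 - l) * sqDist w₂ x) := by
    rw [sqDist, Fin.sum_univ_succ, Fin.cons_zero, hfirst, sqDist, sqDist, Finset.mul_sum,
      Finset.mul_sum, ← Finset.sum_add_distrib]
    gcongr with i
    simpa using hrest i
  nlinarith [convexSqDist_le hw (Fin.cons b x), mul_le_mul_of_nonneg_left hlt₁.le h0,
    mul_le_mul_of_nonneg_left hlt₂.le h1']

end Cube

section Talagrand

variable {n : ℕ}

lemma sum_exp_cons_le {A : Finset (Fin (n + 1) → Bool)} {b : Bool}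
    (hb : (slice A b).Nonempty) (c : Bool) :
    ∑ x : Fin n → Bool, Real.exp (convexSqDist A (Fin.cons c x) / 72) ≤
      Real.exp ((boolSign c - boolSign b) ^ 2 / 72) *
        ∑ x, Real.exp (convexSqDist (slice A b) x / 72) := by
  rw [Finset.mul_sum]
  gcongr with x
  rw [← Real.exp_add, ← add_div]
  gcongr
  exact convexSqDist_cons_le hb c x

lemma exp_convexSqDist_cons_le {A : Finset (Fin (n + 1) → Bool)} {b : Bool}
    (hb : (slice A b).Nonempty) (hb' : (slice A !b).Nonempty) {l : ℝ}
    (h0 : 0 ≤ l) (h1 : l ≤ 1) (x : Fin n → Bool) :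
    Real.exp (convexSqDist A (Fin.cons b x) / 72) ≤ Real.exp ((1 - l) ^ 2 / 18) *
      (l * Real.exp (convexSqDist (slice A b) x / 72) +
        (1 - l) * Real.exp (convexSqDist (slice A !b) x / 72)) := by
  have hconv := convexOn_exp.2 (Set.mem_univ (convexSqDist (slice A b) x / 72))
    (Set.mem_univ (convexSqDist (slice A !b) x / 72)) h0 (sub_nonneg.2 h1) (add_sub_cancel l 1)
  simp only [smul_eq_mul] at hconv
  calc Real.exp (convexSqDist A (Fin.cons b x) / 72)
      ≤ Real.exp ((1 - l) ^ 2 / 18 + (l * (convexSqDist (slice A b) x / 72) +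
          (1 - l) * (convexSqDist (slice A !b) x / 72))) := by
        gcongr
        linarith [convexSqDist_cons_le_convexComb hb hb' h0 h1 x]
    _ ≤ _ := by
        rw [Real.exp_add]
        gcongr

/-- The numerical core of Talagrand's induction step. -/
lemma one_add_exp_mul_two_sub_le {u : ℝ} (hu0 : 0 ≤ u) (hu1 : u ≤ 1) :
    (1 + Real.exp (u ^ 2 / 18) * (1 + u)) * (2 - u) ≤ 4 := by
  set c := Real.exp (u ^ 2 / 18)
  have hc : 0 < c := Real.exp_pos _
  have hlin : -(u ^ 2 / 18) + 1 ≤ Real.exp (-(u ^ 2 / 18)) := Real.add_one_le_exp _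
  have hinv : Real.exp (-(u ^ 2 / 18)) * c = 1 := by
    rw [← Real.exp_add]; simp
  have hc18 : c * (18 - u ^ 2) ≤ 18 := by nlinarith
  nlinarith [mul_le_mul_of_nonneg_left hc18 (by nlinarith : 0 ≤ (1 + u) * (2 - u)),
    sq_nonneg u, mul_nonneg hu0 (sq_nonneg u)]

lemma sum_exp_cube_le_of_card_le {A : Finset (Fin (n + 1) → Bool)} {b : Bool}
    (hb : (slice A b).Nonempty) (hb' : (slice A !b).Nonempty)
    (hcard : (slice A b).card ≤ (slice A !b).card)
    (IHb : ∑ x, Real.exp (convexSqDist (slice A b) x / 72) ≤ 4 ^ n / ((slice A b).card : ℝ))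
    (IHb' : ∑ x, Real.exp (convexSqDist (slice A !b) x / 72) ≤
      4 ^ n / ((slice A !b).card : ℝ)) :
    ∑ x, Real.exp (convexSqDist A x / 72) ≤ 4 ^ (n + 1) / A.card := by
  set α : ℝ := ((slice A b).card : ℝ)
  set γ : ℝ := ((slice A !b).card : ℝ)
  set S₁ := ∑ x, Real.exp (convexSqDist (slice A b) x / 72)
  set S₂ := ∑ x, Real.exp (convexSqDist (slice A !b) x / 72)
  have hα : 0 < α := Nat.cast_pos.2 hb.card_pos
  have hγ : 0 < γ := Nat.cast_pos.2 hb'.card_pos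
  have hαγ : α ≤ γ := Nat.cast_le.2 hcard
  -- Talagrand's choice of mixing weight between the two slices
  set l := α / γ
  have hl0 : 0 ≤ l := by positivity
  have hl1 : l ≤ 1 := (div_le_one hγ).2 hαγ
  set u := 1 - l
  set c := Real.exp (u ^ 2 / 18)
  have hc : 0 < c := Real.exp_pos _
  have hfar : ∑ x, Real.exp (convexSqDist A (Fin.cons b x) / 72) ≤ c * (l * S₁ + u * S₂) := by
    rw [Finset.mul_sum, Finset.mul_sum, ← Finset.sum_add_distrib, Finset.mul_sum]
    exact Finset.sum_le_sum fun x _ => exp_convexSqDist_cons_le hb hb' hl0 hl1 x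
  have hnear : ∑ x, Real.exp (convexSqDist A (Fin.cons (!b) x) / 72) ≤ S₂ := by
    simpa using sum_exp_cons_le hb' (!b)
  have hS₁ : l * S₁ ≤ 4 ^ n / γ := by
    calc l * S₁ ≤ l * (4 ^ n / α) := by gcongr
      _ = 4 ^ n / γ := by simp only [l]; field_simp
  have hS₂ : u * S₂ ≤ u * (4 ^ n / γ) := by gcongr
  have hcardA : (A.card : ℝ) = (2 - u) * γ := by
    rw [card_eq_card_slice_add A b]; push_cast
    change α + γ = (2 - (1 - α / γ)) * γ
    field_simp; ring
  have hkey := one_add_exp_mul_two_sub_le (u := u) (by linarith) (by linarith)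
  rw [sum_cube_cons b, hcardA, pow_succ, le_div_iff₀ (by nlinarith)]
  have h4n : (0 : ℝ) < 4 ^ n := by positivity
  calc (∑ x, Real.exp (convexSqDist A (Fin.cons b x) / 72) +
        ∑ x, Real.exp (convexSqDist A (Fin.cons (!b) x) / 72)) * ((2 - u) * γ)
      ≤ (c * (4 ^ n / γ + u * (4 ^ n / γ)) + 4 ^ n / γ) * ((2 - u) * γ) := by
        gcongr
        · nlinarith
        · linarith [mul_le_mul_of_nonneg_left (add_le_add hS₁ hS₂) hc.le]
        · linarith
    _ = 4 ^ n * ((1 + c * (1 + u)) * (2 - u)) := by field_simp; ring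
    _ ≤ 4 ^ n * 4 := by gcongr

lemma sum_exp_cube_le_of_slice_eq_empty {A : Finset (Fin (n + 1) → Bool)} {b : Bool}
    (hb : (slice A b).Nonempty) (hb' : slice A (!b) = ∅)
    (IHb : ∑ x, Real.exp (convexSqDist (slice A b) x / 72) ≤ 4 ^ n / ((slice A b).card : ℝ)) :
    ∑ x, Real.exp (convexSqDist A x / 72) ≤ 4 ^ (n + 1) / A.card := by
  set S := ∑ x, Real.exp (convexSqDist (slice A b) x / 72)
  have hS : 0 ≤ S := Finset.sum_nonneg fun _ _ => (Real.exp_pos _).le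
  have hexp : Real.exp ((boolSign (!b) - boolSign b) ^ 2 / 72) ≤ 3 := by
    calc Real.exp ((boolSign (!b) - boolSign b) ^ 2 / 72) ≤ Real.exp 1 := by
          gcongr; linarith [boolSign_sub_sq_le (!b) b]
      _ ≤ 3 := Real.exp_one_lt_d9.le.trans (by norm_num)
  have hnear : ∑ x, Real.exp (convexSqDist A (Fin.cons b x) / 72) ≤ S := by
    simpa using sum_exp_cons_le hb b
  have hfar := sum_exp_cons_le hb (!b)
  rw [sum_cube_cons b, card_eq_card_slice_add A b, hb', Finset.card_empty, add_zero, pow_succ,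
    mul_comm, mul_div_assoc]
  nlinarith [mul_le_mul_of_nonneg_right hexp hS]

/-- Talagrand's convex distance inequality on the discrete cube. The constant `1/72` (in `±1`
coordinates; the sharp one is `1/16`) leaves room for the elementary induction step. -/
theorem sum_exp_convexSqDist_le (A : Finset (Fin n → Bool)) (hA : A.Nonempty) :
    ∑ x, Real.exp (convexSqDist A x / 72) ≤ 4 ^ n / A.card := by
  induction n with
  | zero =>
    obtain ⟨a, ha⟩ := hA
    have hcard : A.card = 1 :=
      le_antisymm (A.card_le_univ.trans (by simp)) (Finset.card_pos.2 ⟨a, ha⟩)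
    have hdist : ∀ x, convexSqDist A x ≤ 0 := fun x => by
      simpa [sqDist] using convexSqDist_le (isWeight_indicator ha) x
    calc ∑ x, Real.exp (convexSqDist A x / 72) ≤ ∑ _x : Fin 0 → Bool, 1 :=
          Finset.sum_le_sum fun x _ => Real.exp_le_one_iff.2 (by linarith [hdist x])
      _ = 4 ^ 0 / A.card := by simp [hcard]
  | succ n IH =>
    by_cases hempty : ∃ b, slice A (!b) = ∅
    · obtain ⟨b, hb'⟩ := hempty
      have hb : (slice A b).Nonempty := by
        have hcard := card_eq_card_slice_add A b
        rw [hb', Finset.card_empty, add_zero] at hcard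
        exact Finset.card_pos.1 (hcard ▸ hA.card_pos)
      exact sum_exp_cube_le_of_slice_eq_empty hb hb' (IH _ hb)
    · have hne : ∀ b, (slice A b).Nonempty := fun b => by
        simpa [Finset.nonempty_iff_ne_empty] using fun h => hempty ⟨!b, by simpa using h⟩
      obtain hle | hle := le_total (slice A true).card (slice A false).card
      · exact sum_exp_cube_le_of_card_le (hne true) (hne false) hle (IH _ (hne true))
          (IH _ (hne false))
      · exact sum_exp_cube_le_of_card_le (hne false) (hne true) hle (IH _ (hne false))
          (IH _ (hne true))

end Talagrand

section CubeTail

variable {n : ℕ}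

def signVec (v : Fin n → Bool) : Fin n → ℝ := fun i => boolSign (v i)

lemma barycenter_eq_sum_smul (w : (Fin n → Bool) → ℝ) :
    barycenter w = ∑ v, w v • signVec v := by
  ext i
  simp [barycenter, signVec, Finset.sum_apply]

lemma apply_barycenter_le {F : (Fin n → ℝ) → ℝ} (hF : ConvexOn ℝ Set.univ F)
    {A : Finset (Fin n → Bool)} {w : (Fin n → Bool) → ℝ} (hw : IsWeight A w) {M : ℝ}
    (hM : ∀ v ∈ A, F (signVec v) ≤ M) : F (barycenter w) ≤ M := by
  rw [barycenter_eq_sum_smul]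
  calc F (∑ v, w v • signVec v) ≤ ∑ v, w v • F (signVec v) :=
        hF.map_sum_le (fun v _ => hw.1 v) hw.2.2 fun _ _ => Set.mem_univ _
    _ ≤ ∑ v, w v * M := by
        gcongr with v
        by_cases hv : v ∈ A
        · exact mul_le_mul_of_nonneg_left (hM v hv) (hw.1 v)
        · simp [hw.2.1 v hv]
    _ = M := by rw [← Finset.sum_mul, hw.2.2, one_mul]

lemma card_le_two_mul_card_le_two_mean {α : Type*} [Fintype α] (f : α → ℝ)
    (hf : ∀ a, 0 ≤ f a) :
    (Fintype.card α : ℝ) ≤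
      2 * (Finset.univ.filter fun a => f a ≤ 2 * ((∑ b, f b) / Fintype.card α)).card := by
  set m := (∑ b, f b) / Fintype.card α
  set A := Finset.univ.filter fun a => f a ≤ 2 * m
  set B := Finset.univ.filter fun a => ¬ f a ≤ 2 * m
  have hsplit : (A.card : ℝ) + B.card = Fintype.card α := by
    exact_mod_cast Finset.card_filter_add_card_filter_not (s := Finset.univ) _
  have hm : 0 ≤ m := div_nonneg (Finset.sum_nonneg fun b _ => hf b) (Nat.cast_nonneg _)
  obtain hm0 | hmpos := hm.eq_or_lt
  · have hsum : ∑ b, f b = 0 := by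
      rcases (Fintype.card α).eq_zero_or_pos with h | h
      · simp [Fintype.card_eq_zero_iff.1 h]
      · simpa [m, h.ne'] using hm0.symm
    have hA : A = Finset.univ := Finset.filter_true_of_mem fun a _ => by
      rw [← hm0, mul_zero]
      exact ((Finset.sum_eq_zero_iff_of_nonneg fun b _ => hf b).1 hsum a (Finset.mem_univ a)).le
    rw [hA, Finset.card_univ]
    have := (Fintype.card α).cast_nonneg (α := ℝ)
    linarith
  · have hMarkov : (B.card : ℝ) * (2 * m) ≤ Fintype.card α * m := by
      calc (B.card : ℝ) * (2 * m) = B.card • (2 * m) := (nsmul_eq_mul _ _).symm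
        _ ≤ ∑ a ∈ B, f a :=
            Finset.card_nsmul_le_sum _ _ _ fun a ha => (not_le.1 (Finset.mem_filter.1 ha).2).le
        _ ≤ ∑ a, f a := Finset.sum_le_sum_of_subset_of_nonneg (Finset.subset_univ _)
            fun a _ _ => hf a
        _ = Fintype.card α * m := by
            rcases (Fintype.card α).eq_zero_or_pos with h | h
            · simp [Fintype.card_eq_zero_iff.1 h]
            · simp only [m]; field_simp
    nlinarith

theorem card_two_mean_add_lt_le {F : (Fin n → ℝ) → ℝ} (hF0 : ∀ a, 0 ≤ F a)
    (hF : ConvexOn ℝ Set.univ F) {σ : ℝ} (hσ : 0 ≤ σ)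
    (hFσ : ∀ a b, F a ≤ F b + σ * √(∑ i, (a i - b i) ^ 2)) {t : ℝ} (ht : 0 ≤ t) :
    ((Finset.univ.filter fun v : Fin n → Bool =>
        2 * ((∑ u, F (signVec u)) / 2 ^ n) + 3 * (t * σ) < F (signVec v)).card : ℝ) ≤
      2 * 2 ^ n * Real.exp (-t ^ 2 / 8) := by
  set m := (∑ u, F (signVec u)) / 2 ^ n
  set A := Finset.univ.filter fun v : Fin n → Bool => F (signVec v) ≤ 2 * m
  set bad := Finset.univ.filter fun v : Fin n → Bool => 2 * m + 3 * (t * σ) < F (signVec v)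
  have hcube : (Fintype.card (Fin n → Bool) : ℝ) = 2 ^ n := by simp
  have hA : (2 : ℝ) ^ n ≤ 2 * A.card := by
    have h := card_le_two_mul_card_le_two_mean (F ∘ signVec) fun v => hF0 _
    rwa [hcube] at h
  have hApos : (0 : ℝ) < A.card := by linarith [pow_pos (two_pos (α := ℝ)) n]
  have hAne : A.Nonempty := Finset.card_pos.1 (by exact_mod_cast hApos)
  have hfar : ∀ v ∈ bad, 9 * t ^ 2 ≤ convexSqDist A v := by
    intro v hv
    refine le_convexSqDist hAne fun w hw => ?_
    have hbar : F (barycenter w) ≤ 2 * m :=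
      apply_barycenter_le hF hw fun u hu => (Finset.mem_filter.1 hu).2
    have hlip : F (signVec v) ≤ F (barycenter w) + σ * √(sqDist w v) := hFσ _ _
    have h3t : 3 * t < √(sqDist w v) :=
      lt_of_mul_lt_mul_left (by linarith [(Finset.mem_filter.1 hv).2, hlip]) hσ
    calc 9 * t ^ 2 = (3 * t) ^ 2 := by ring
      _ ≤ √(sqDist w v) ^ 2 := by gcongr
      _ = sqDist w v := Real.sq_sqrt (sqDist_nonneg w v)
  have hcount : (bad.card : ℝ) * Real.exp (t ^ 2 / 8) ≤ 2 * 2 ^ n := by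
    calc (bad.card : ℝ) * Real.exp (t ^ 2 / 8) = bad.card • Real.exp (t ^ 2 / 8) :=
          (nsmul_eq_mul _ _).symm
      _ ≤ ∑ v ∈ bad, Real.exp (convexSqDist A v / 72) :=
          Finset.card_nsmul_le_sum _ _ _ fun v hv => Real.exp_le_exp.2 (by linarith [hfar v hv])
      _ ≤ ∑ v, Real.exp (convexSqDist A v / 72) :=
          Finset.sum_le_sum_of_subset_of_nonneg (Finset.subset_univ _) fun _ _ _ => by positivity
      _ ≤ 4 ^ n / A.card := sum_exp_convexSqDist_le A hAne
      _ ≤ 2 * 2 ^ n := by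
          rw [div_le_iff₀ hApos, show (4 : ℝ) ^ n = 2 ^ n * 2 ^ n by rw [← mul_pow]; norm_num]
          nlinarith [pow_pos (two_pos (α := ℝ)) n]
  rw [neg_div, Real.exp_neg, ← div_eq_mul_inv, le_div_iff₀ (Real.exp_pos _)]
  exact hcount

end CubeTail

section WeakNorms

variable {E : Type*} [NormedAddCommGroup E] [NormedSpace ℝ E] {N : ℕ}

lemma abs_apply_le_norm {g : E →L[ℝ] ℝ} (hg : ‖g‖ ≤ 1) (z : E) : |g z| ≤ ‖z‖ := by
  simpa using g.le_of_opNorm_le hg z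

lemma le_l1wFin (y : Fin N → E) {g : E →L[ℝ] ℝ} (hg : ‖g‖ ≤ 1) :
    ∑ n, |g (y n)| ≤ l1wFin y := by
  refine le_ciSup (f := fun g : {g : E →L[ℝ] ℝ // ‖g‖ ≤ 1} => ∑ n, |g.1 (y n)|)
    ⟨∑ n, ‖y n‖, ?_⟩ ⟨g, hg⟩
  rintro _ ⟨g, rfl⟩
  exact Finset.sum_le_sum fun n _ => abs_apply_le_norm g.2 _

lemma le_l2wFin (z : Fin N → E) {g : E →L[ℝ] ℝ} (hg : ‖g‖ ≤ 1) :
    (∑ n, g (z n) ^ 2) ^ ((1 : ℝ) / 2) ≤ l2wFin z := by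
  refine le_ciSup
    (f := fun g : {g : E →L[ℝ] ℝ // ‖g‖ ≤ 1} => (∑ n, g.1 (z n) ^ 2) ^ ((1 : ℝ) / 2))
    ⟨(∑ n, ‖z n‖ ^ 2) ^ ((1 : ℝ) / 2), ?_⟩ ⟨g, hg⟩
  rintro _ ⟨g, rfl⟩
  refine Real.rpow_le_rpow (by positivity) (Finset.sum_le_sum fun n _ => ?_) (by norm_num)
  exact sq_le_sq.2 ((abs_apply_le_norm g.2 _).trans (le_abs_self _))

lemma l1wFin_nonneg (y : Fin N → E) : 0 ≤ l1wFin y :=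
  (Finset.sum_nonneg fun _ _ => abs_nonneg _).trans (le_l1wFin y (g := 0) (by simp))

lemma l2wFin_nonneg (z : Fin N → E) : 0 ≤ l2wFin z :=
  (Real.rpow_nonneg (Finset.sum_nonneg fun _ _ => sq_nonneg _) _).trans
    (le_l2wFin z (g := 0) (by simp))

lemma exists_norm_sum_smul_eq (a : Fin N → ℝ) (y : Fin N → E) :
    ∃ g : E →L[ℝ] ℝ, ‖g‖ ≤ 1 ∧ ‖∑ n, a n • y n‖ = ∑ n, a n * g (y n) := by
  obtain ⟨g, hg, hgx⟩ := exists_dual_vector'' ℝ (∑ n, a n • y n)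
  refine ⟨g, hg, ?_⟩
  simpa using hgx.symm

lemma norm_sum_smul_le_l1wFin {a : Fin N → ℝ} (ha : ∀ n, |a n| ≤ 1) (y : Fin N → E) :
    ‖∑ n, a n • y n‖ ≤ l1wFin y := by
  obtain ⟨g, hg, hnorm⟩ := exists_norm_sum_smul_eq a y
  calc ‖∑ n, a n • y n‖ = ∑ n, a n * g (y n) := hnorm
    _ ≤ ∑ n, |g (y n)| := Finset.sum_le_sum fun n _ => by
        calc a n * g (y n) ≤ |a n| * |g (y n)| := by rw [← abs_mul]; exact le_abs_self _
          _ ≤ |g (y n)| := mul_le_of_le_one_left (abs_nonneg _) (ha n)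
    _ ≤ l1wFin y := le_l1wFin y hg

lemma norm_sum_smul_le_l2wFin (a : Fin N → ℝ) (z : Fin N → E) :
    ‖∑ n, a n • z n‖ ≤ l2wFin z * √(∑ n, a n ^ 2) := by
  obtain ⟨g, hg, hnorm⟩ := exists_norm_sum_smul_eq a z
  calc ‖∑ n, a n • z n‖ = ∑ n, a n * g (z n) := hnorm
    _ ≤ √(∑ n, a n ^ 2) * √(∑ n, g (z n) ^ 2) := Real.sum_mul_le_sqrt_mul_sqrt _ _ _
    _ ≤ l2wFin z * √(∑ n, a n ^ 2) := by
        rw [mul_comm]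
        exact mul_le_mul_of_nonneg_right ((Real.sqrt_eq_rpow _).trans_le (le_l2wFin z hg))
          (Real.sqrt_nonneg _)

lemma abs_norm_sum_smul_sub_le {x y z : Fin N → E} (hxyz : ∀ n, x n = y n + z n)
    {a : Fin N → ℝ} (ha : ∀ n, |a n| ≤ 1) :
    |‖∑ n, a n • x n‖ - ‖∑ n, a n • z n‖| ≤ l1wFin y := by
  have hsub : ∑ n, a n • x n - ∑ n, a n • z n = ∑ n, a n • y n := by
    simp [hxyz, smul_add, Finset.sum_add_distrib]
  exact (abs_norm_sub_norm_le _ _).trans (hsub ▸ norm_sum_smul_le_l1wFin ha y)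

lemma convexOn_norm_sum_smul (z : Fin N → E) :
    ConvexOn ℝ Set.univ fun a : Fin N → ℝ => ‖∑ n, a n • z n‖ := by
  simpa [Function.comp_def, Fintype.linearCombination_apply] using
    (convexOn_norm convex_univ).comp_linearMap (Fintype.linearCombination ℝ z)

lemma norm_sum_smul_le_add_l2wFin (z : Fin N → E) (a b : Fin N → ℝ) :
    ‖∑ n, a n • z n‖ ≤ ‖∑ n, b n • z n‖ + l2wFin z * √(∑ n, (a n - b n) ^ 2) := by
  have hsplit : ∑ n, a n • z n = ∑ n, b n • z n + ∑ n, (a n - b n) • z n := by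
    simp [sub_smul, Finset.sum_sub_distrib]
  rw [hsplit]
  exact (norm_add_le _ _).trans (by gcongr; exact norm_sum_smul_le_l2wFin _ z)

end WeakNorms

section SignPattern

variable {Ω : Type*} [MeasurableSpace Ω] {μ : Measure Ω} {N : ℕ} {ε : Fin N → Ω → ℝ}

def signs (ε : Fin N → Ω → ℝ) (ω : Ω) : Fin N → Bool := fun n => decide (0 < ε n ω)

lemma measurable_decide_pos : Measurable fun r : ℝ => decide (0 < r) :=
  measurable_to_countable' fun b => by
    cases b
    · convert measurableSet_Iic (a := (0 : ℝ)) using 1; ext r; simp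
    · convert measurableSet_Ioi (a := (0 : ℝ)) using 1; ext r; simp

lemma measurable_signs (hε : ∀ n, Measurable (ε n)) : Measurable (signs ε) :=
  measurable_pi_lambda _ fun n => measurable_decide_pos.comp (hε n)

variable [IsProbabilityMeasure μ]

lemma IsRademacherFin.ae_eq_one_or_neg_one (hε : IsRademacherFin μ ε) (n : Fin N) :
    ∀ᵐ ω ∂μ, ε n ω = 1 ∨ ε n ω = -1 := by
  have hm : ∀ r : ℝ, MeasurableSet {ω | ε n ω = r} :=
    fun r => hε.1 n (measurableSet_singleton r)
  have hdisj : Disjoint {ω | ε n ω = 1} {ω | ε n ω = -1} :=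
    Set.disjoint_left.2 fun ω h1 h2 => by norm_num [show ε n ω = 1 from h1] at h2
  have hfull : μ ({ω | ε n ω = 1} ∪ {ω | ε n ω = -1}) = 1 := by
    rw [measure_union hdisj (hm _), (hε.2.2 n).1, (hε.2.2 n).2, ENNReal.add_halves]
  exact (prob_compl_eq_zero_iff ((hm 1).union (hm _))).2 hfull

lemma IsRademacherFin.ae_eq_boolSign_signs (hε : IsRademacherFin μ ε) :
    ∀ᵐ ω ∂μ, ∀ n, ε n ω = boolSign (signs ε ω n) := by
  rw [ae_all_iff]
  intro n
  filter_upwards [IsRademacherFin.ae_eq_one_or_neg_one hε n] with ω hω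
  rcases hω with h | h <;> norm_num [h, signs, boolSign]

lemma IsRademacherFin.measure_signs_eq (hε : IsRademacherFin μ ε) (n : Fin N) (b : Bool) :
    μ {ω | signs ε ω n = b} = 1 / 2 := by
  have hae : {ω | signs ε ω n = b} =ᵐ[μ] {ω | ε n ω = boolSign b} := by
    filter_upwards [IsRademacherFin.ae_eq_one_or_neg_one hε n] with ω hω
    change (signs ε ω n = b) = (ε n ω = boolSign b)
    apply propext
    cases b <;> rcases hω with h | h <;> norm_num [h, signs, boolSign]
  rw [measure_congr hae]
  cases b
  · simpa [boolSign] using (hε.2.2 n).2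
  · simpa [boolSign] using (hε.2.2 n).1

lemma IsRademacherFin.map_signs (hε : IsRademacherFin μ ε) :
    μ.map (signs ε) = ((2 : ℝ≥0∞) ^ N)⁻¹ • Measure.count := by
  refine Measure.ext_iff_singleton.2 fun v => ?_
  have hfiber : signs ε ⁻¹' {v} = ⋂ n, {ω | signs ε ω n = v n} := by
    ext ω
    simp [signs, funext_iff]
  have hindep : iIndepFun (fun n => (fun r : ℝ => decide (0 < r)) ∘ ε n) μ :=
    hε.2.1.comp _ fun _ => measurable_decide_pos
  rw [Measure.map_apply (measurable_signs hε.1) (measurableSet_singleton v), hfiber,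
    hindep.meas_iInter (s := fun n => {ω | signs ε ω n = v n})
      fun n => ⟨{v n}, measurableSet_singleton _, rfl⟩]
  simp only [Measure.smul_apply, Measure.count_singleton, smul_eq_mul, mul_one]
  rw [Finset.prod_congr rfl fun n _ => IsRademacherFin.measure_signs_eq hε n (v n)]
  simp [ENNReal.inv_pow]

end SignPattern

section Transfer

variable {Ω : Type*} [MeasurableSpace Ω] {μ : Measure Ω} [IsProbabilityMeasure μ]
  {N : ℕ} {ε : Fin N → Ω → ℝ} {E : Type*} [NormedAddCommGroup E] [NormedSpace ℝ E]

lemma IsRademacherFin.measure_signs_preimage (hε : IsRademacherFin μ ε)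
    (s : Finset (Fin N → Bool)) : μ (signs ε ⁻¹' s) = s.card / 2 ^ N := by
  rw [← Measure.map_apply (measurable_signs hε.1) s.measurableSet,
    IsRademacherFin.map_signs hε]
  simp [Measure.count_apply_finset, div_eq_mul_inv, mul_comm]

lemma IsRademacherFin.integral_norm_sum_smul (hε : IsRademacherFin μ ε) (z : Fin N → E) :
    ∫ ω, ‖∑ n, ε n ω • z n‖ ∂μ = (∑ v, ‖∑ n, signVec v n • z n‖) / 2 ^ N := by
  have hae : (fun ω => ‖∑ n, ε n ω • z n‖) =ᵐ[μ]
      fun ω => (fun v => ‖∑ n, signVec v n • z n‖) (signs ε ω) := by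
    filter_upwards [IsRademacherFin.ae_eq_boolSign_signs hε] with ω hω
    simp only [signVec, ← hω]
  rw [integral_congr_ae hae, ← integral_map (measurable_signs hε.1).aemeasurable
    (f := fun v => ‖∑ n, signVec v n • z n‖) (measurable_of_countable _).aestronglyMeasurable,
    IsRademacherFin.map_signs hε, integral_smul_measure, integral_count]
  simp [div_eq_inv_mul]

lemma IsRademacherFin.measure_lt_le_of_add (hε : IsRademacherFin μ ε) {x y z : Fin N → E}
    (hxyz : ∀ n, x n = y n + z n) (c : ℝ) :
    μ {ω | 2 * (∫ ω', ‖∑ n, ε n ω' • x n‖ ∂μ) + 3 * (l1wFin y + c) < ‖∑ n, ε n ω • x n‖} ≤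
      μ {ω | 2 * (∫ ω', ‖∑ n, ε n ω' • z n‖ ∂μ) + 3 * c < ‖∑ n, ε n ω • z n‖} := by
  have hint : ∫ ω, ‖∑ n, ε n ω • z n‖ ∂μ ≤ (∫ ω, ‖∑ n, ε n ω • x n‖ ∂μ) + l1wFin y := by
    rw [IsRademacherFin.integral_norm_sum_smul hε, IsRademacherFin.integral_norm_sum_smul hε,
      div_add' _ _ _ (by positivity)]
    gcongr
    calc ∑ v, ‖∑ n, signVec v n • z n‖
        ≤ ∑ v : Fin N → Bool, (‖∑ n, signVec v n • x n‖ + l1wFin y) :=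
          Finset.sum_le_sum fun v _ => by
            linarith [abs_le.1 (abs_norm_sum_smul_sub_le hxyz (a := signVec v)
              fun n => (abs_boolSign (v n)).le)]
      _ = _ := by simp [Finset.sum_add_distrib, mul_comm]
  refine measure_mono_ae ?_
  filter_upwards [IsRademacherFin.ae_eq_boolSign_signs hε] with ω hω hlt
  have hdiff :=
    abs_le.1 (abs_norm_sum_smul_sub_le hxyz fun n => (hω n).symm ▸ (abs_boolSign _).le)
  change _ < _ at hlt ⊢
  linarith [l1wFin_nonneg y]

theorem IsRademacherFin.measure_two_integral_add_lt_le (hε : IsRademacherFin μ ε)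
    (z : Fin N → E) {t : ℝ} (ht : 0 ≤ t) :
    μ {ω | 2 * (∫ ω', ‖∑ n, ε n ω' • z n‖ ∂μ) + 3 * (t * l2wFin z) < ‖∑ n, ε n ω • z n‖} ≤
      ENNReal.ofReal (2 * Real.exp (-t ^ 2 / 8)) := by
  set F := fun a : Fin N → ℝ => ‖∑ n, a n • z n‖
  set bad := Finset.univ.filter fun v : Fin N → Bool =>
    2 * ((∑ u, F (signVec u)) / 2 ^ N) + 3 * (t * l2wFin z) < F (signVec v)
  have hcard : (bad.card : ℝ) ≤ 2 * 2 ^ N * Real.exp (-t ^ 2 / 8) :=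
    card_two_mean_add_lt_le (fun _ => norm_nonneg _) (convexOn_norm_sum_smul z)
      (l2wFin_nonneg z) (norm_sum_smul_le_add_l2wFin z) ht
  have hsub : {ω | 2 * (∫ ω', ‖∑ n, ε n ω' • z n‖ ∂μ) + 3 * (t * l2wFin z) <
      ‖∑ n, ε n ω • z n‖} ≤ᵐ[μ] signs ε ⁻¹' bad := by
    filter_upwards [IsRademacherFin.ae_eq_boolSign_signs hε] with ω hω
      (hlt : _ < ‖∑ n, ε n ω • z n‖)
    change signs ε ω ∈ bad
    refine Finset.mem_filter.2 ⟨Finset.mem_univ _, ?_⟩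
    rw [IsRademacherFin.integral_norm_sum_smul hε] at hlt
    simpa only [F, signVec, ← hω] using hlt
  calc _ ≤ μ (signs ε ⁻¹' bad) := measure_mono_ae hsub
    _ = ENNReal.ofReal (bad.card / 2 ^ N) := by
        rw [IsRademacherFin.measure_signs_preimage hε, ENNReal.ofReal_div_of_pos (by positivity)]
        simp
    _ ≤ ENNReal.ofReal (2 * Real.exp (-t ^ 2 / 8)) := by
        gcongr
        rw [div_le_iff₀ (by positivity)]
        linarith

end Transfer

lemma measure_lt_le_of_forall_pos_add {Ω : Type*} [MeasurableSpace Ω] {μ : Measure Ω}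
    {f : Ω → ℝ} {c : ℝ} {B : ℝ≥0∞} (h : ∀ η > 0, μ {ω | c + η < f ω} ≤ B) :
    μ {ω | c < f ω} ≤ B := by
  have hunion : {ω | c < f ω} = ⋃ k : ℕ, {ω | c + 1 / (k + 1) < f ω} := by
    ext ω
    simp only [Set.mem_ofPred_eq, Set.mem_iUnion]
    refine ⟨fun hω => ?_, fun ⟨k, hk⟩ => lt_trans (by simp; positivity) hk⟩
    obtain ⟨k, hk⟩ := exists_nat_one_div_lt (sub_pos.2 hω)
    exact ⟨k, by linarith⟩
  have hmono : Monotone fun k : ℕ => {ω | c + 1 / ((k : ℝ) + 1) < f ω} := by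
    intro k l hkl ω (hω : _ < f ω)
    have : 1 / ((l : ℝ) + 1) ≤ 1 / ((k : ℝ) + 1) := by gcongr
    exact show _ < f ω by linarith
  rw [hunion, hmono.measure_iUnion]
  exact iSup_le fun k => h _ (by positivity)

lemma exists_add_l1wFin_add_lt_KwCouple {E : Type*} [NormedAddCommGroup E] [NormedSpace ℝ E]
    {N : ℕ} (x : Fin N → E) (t : ℝ) {δ : ℝ} (hδ : 0 < δ) :
    ∃ y z : Fin N → E, (∀ n, x n = y n + z n) ∧ l1wFin y + t * l2wFin z < KwCouple x t + δ := by
  obtain ⟨_, ⟨y, z, hxyz, rfl⟩, hlt⟩ := Real.lt_sInf_add_pos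
    (s := {r | ∃ y z : Fin N → E, (∀ n, x n = y n + z n) ∧ r = l1wFin y + t * l2wFin z})
    ⟨_, x, 0, fun n => (add_zero (x n)).symm, rfl⟩ hδ
  exact ⟨y, z, hxyz, hlt⟩

end RademacherTail

end

open RademacherTail

theorem stmt12_general {Ω : Type*} [MeasurableSpace Ω] (μ : Measure Ω) [IsProbabilityMeasure μ]
    {E : Type*} [NormedAddCommGroup E] [NormedSpace ℝ E]
    {N : ℕ} (ε : Fin N → Ω → ℝ) (hε : IsRademacherFin μ ε) (x : Fin N → E)
    (t : ℝ) (ht : 0 < t) :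
    μ {ω | 2 * (∫ ω', ‖∑ n, ε n ω' • x n‖ ∂μ) + 3 * KwCouple x t <
        ‖∑ n, ε n ω • x n‖} ≤
      ENNReal.ofReal (4 * Real.exp (-t ^ 2 / 8)) := by
  refine measure_lt_le_of_forall_pos_add fun η hη => ?_
  obtain ⟨y, z, hxyz, hlt⟩ := exists_add_l1wFin_add_lt_KwCouple x t (div_pos hη three_pos)
  calc μ {ω | 2 * (∫ ω', ‖∑ n, ε n ω' • x n‖ ∂μ) + 3 * KwCouple x t + η < ‖∑ n, ε n ω • x n‖}
      ≤ μ {ω | 2 * (∫ ω', ‖∑ n, ε n ω' • x n‖ ∂μ) + 3 * (l1wFin y + t * l2wFin z) <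
          ‖∑ n, ε n ω • x n‖} :=
        measure_mono fun ω hω => by simp only [Set.mem_ofPred_eq] at hω ⊢; linarith
    _ ≤ μ {ω | 2 * (∫ ω', ‖∑ n, ε n ω' • z n‖ ∂μ) + 3 * (t * l2wFin z) <
          ‖∑ n, ε n ω • z n‖} := IsRademacherFin.measure_lt_le_of_add hε hxyz _
    _ ≤ ENNReal.ofReal (2 * Real.exp (-t ^ 2 / 8)) :=
        IsRademacherFin.measure_two_integral_add_lt_le hε z ht.le
    _ ≤ ENNReal.ofReal (4 * Real.exp (-t ^ 2 / 8)) := by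
        gcongr
        norm_num

theorem stmt12 {Ω : Type*} [MeasurableSpace Ω] (μ : Measure Ω) [IsProbabilityMeasure μ]
    {E : Type*} [NormedAddCommGroup E] [NormedSpace ℝ E] [CompleteSpace E]
    {N : ℕ} (ε : Fin N → Ω → ℝ) (hε : IsRademacherFin μ ε) (x : Fin N → E)
    (t : ℝ) (ht : 0 < t) :
    μ {ω | 2 * (∫ ω', ‖∑ n, ε n ω' • x n‖ ∂μ) + 3 * KwCouple x t <
        ‖∑ n, ε n ω • x n‖} ≤
      ENNReal.ofReal (4 * Real.exp (-t ^ 2 / 8)) :=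
  stmt12_general μ ε hε x t ht
end

section
/- For finitely many elements x₁, …, x_N of ℓ_∞ and every t > 0, K((xₙ)_{n=1}^N, t; ℓ₁^w(ℓ_∞), ℓ₂^w(ℓ_∞)) ≤ 2·K^w_{1,2}((xₙ)_{n=1}^N, t). -/
/-!
Let `S > K^w_{1,2}((xₙ), t)`. Coordinate functionals have norm one, so each coordinate sequence
`(x_{n,j})ₙ` splits as `b + c` with `‖b‖₁ + t‖c‖₂ < S`. Truncating every coordinate at the single
level `λ = S/t²` gives `xₙ = yₙ + zₙ` with `∑ₙ |y_{n,j}| ≤ S` and `t‖(z_{n,j})ₙ‖₂ ≤ S` for all `j`,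
because the truncation `T` satisfies `|b + c - T(b+c)| ≤ |b| + c²/(4λ)` and
`T(b+c)² ≤ λ|b| + |c||T(b+c)|`. In `ℓ∞` such coordinatewise bounds control the weak norms, since
`∑ |x*(yₙ)| = x*(∑ ±yₙ)` and `∑ x*(zₙ)² = x*(∑ x*(zₙ) zₙ)`.
-/

open scoped ENNReal

/-- The K-functional of the couple `(ℓ₁, ℓ₂)` for a finite scalar sequence. -/
noncomputable def K12Fin {N : ℕ} (a : Fin N → ℝ) (t : ℝ) : ℝ :=
  sInf {r : ℝ | ∃ b c : Fin N → ℝ, (∀ n, a n = b n + c n) ∧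
    r = (∑ n, |b n|) + t * (∑ n, (c n) ^ 2) ^ ((1 : ℝ) / 2)}

/-- The weak K-functional `K^w_{1,2}((xₙ), t) = sup_{‖x*‖ ≤ 1} K₁,₂((x*(xₙ)), t)`. -/
noncomputable def Kw12Fin {E : Type*} [NormedAddCommGroup E] [NormedSpace ℝ E]
    {N : ℕ} (x : Fin N → E) (t : ℝ) : ℝ :=
  ⨆ f : {f : E →L[ℝ] ℝ // ‖f‖ ≤ 1}, K12Fin (fun n => f.1 (x n)) t

noncomputable def truncAt (lam s : ℝ) : ℝ := max (min s lam) (-lam)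

section Truncation

variable {lam : ℝ}

lemma abs_truncAt_le (hlam : 0 ≤ lam) (s : ℝ) : |truncAt lam s| ≤ lam :=
  abs_le.2 ⟨le_max_right _ _, max_le (min_le_right _ _) (neg_le_self hlam)⟩

lemma abs_truncAt_le_abs (hlam : 0 ≤ lam) (s : ℝ) : |truncAt lam s| ≤ |s| := by
  unfold truncAt
  refine abs_le.2 ⟨?_, ?_⟩
  · exact (le_min (neg_abs_le s) ((neg_nonpos.2 (abs_nonneg s)).trans hlam)).trans
      (le_max_left _ _)
  · exact max_le ((min_le_left _ _).trans (le_abs_self s))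
      ((neg_nonpos.2 hlam).trans (abs_nonneg s))

lemma abs_sub_truncAt_le_max (hlam : 0 ≤ lam) (s : ℝ) :
    |s - truncAt lam s| ≤ max (|s| - lam) 0 := by
  unfold truncAt
  rcases le_total s lam with h₁ | h₁
  · rcases le_total (-lam) s with h₂ | h₂
    · rw [min_eq_left h₁, max_eq_left h₂, sub_self, abs_zero]
      exact le_max_right _ _
    · rw [min_eq_left h₁, max_eq_right h₂, abs_of_nonpos (by linarith),
        abs_of_nonpos (by linarith)]
      exact le_max_of_le_left (by linarith)
  · rw [min_eq_right h₁, max_eq_left (by linarith), abs_of_nonneg (by linarith),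
      abs_of_nonneg (by linarith)]
    exact le_max_left _ _

lemma abs_sub_truncAt_add_le (hlam : 0 < lam) (b c : ℝ) :
    |b + c - truncAt lam (b + c)| ≤ |b| + c ^ 2 / (4 * lam) := by
  have hc : |c| - lam ≤ c ^ 2 / (4 * lam) := by
    rw [le_div_iff₀ (by positivity)]
    nlinarith [sq_nonneg (|c| - 2 * lam), sq_abs c]
  refine (abs_sub_truncAt_le_max hlam.le _).trans (max_le ?_ (by positivity))
  linarith [abs_add_le b c]

lemma sq_truncAt_add_le (hlam : 0 ≤ lam) (b c : ℝ) :
    truncAt lam (b + c) ^ 2 ≤ lam * |b| + |c| * |truncAt lam (b + c)| := by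
  have h₁ := abs_truncAt_le hlam (b + c)
  have h₂ := (abs_truncAt_le_abs hlam (b + c)).trans (abs_add_le b c)
  rw [← sq_abs]
  nlinarith [abs_nonneg b, abs_nonneg c, abs_nonneg (truncAt lam (b + c))]

end Truncation

section FiniteSums

variable {ι : Type*} [Fintype ι] {a b c : ι → ℝ} {t S : ℝ}

lemma sum_abs_sub_truncAt_le (habc : ∀ i, a i = b i + c i) (ht : 0 < t)
    (hS : ∑ i, |b i| + t * √(∑ i, c i ^ 2) ≤ S) (hS₀ : 0 < S) :
    ∑ i, |a i - truncAt (S / t ^ 2) (a i)| ≤ S := by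
  set σ := √(∑ i, c i ^ 2)
  have hσ : σ ^ 2 = ∑ i, c i ^ 2 := Real.sq_sqrt (by positivity)
  have hB : 0 ≤ ∑ i, |b i| := by positivity
  have hquad : (∑ i, c i ^ 2) / (4 * (S / t ^ 2)) ≤ t * σ := by
    rw [div_le_iff₀ (by positivity), ← hσ]
    field_simp
    nlinarith [mul_nonneg ht.le (Real.sqrt_nonneg (∑ i, c i ^ 2))]
  calc ∑ i, |a i - truncAt (S / t ^ 2) (a i)|
      ≤ ∑ i, (|b i| + c i ^ 2 / (4 * (S / t ^ 2))) :=
        Finset.sum_le_sum fun i _ => habc i ▸ abs_sub_truncAt_add_le (by positivity) _ _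
    _ = ∑ i, |b i| + (∑ i, c i ^ 2) / (4 * (S / t ^ 2)) := by
        rw [Finset.sum_add_distrib, Finset.sum_div]
    _ ≤ S := by linarith

lemma mul_sqrt_sum_sq_truncAt_le (habc : ∀ i, a i = b i + c i) (ht : 0 < t)
    (hS : ∑ i, |b i| + t * √(∑ i, c i ^ 2) ≤ S) (hS₀ : 0 < S) :
    t * √(∑ i, truncAt (S / t ^ 2) (a i) ^ 2) ≤ S := by
  set T := fun i => truncAt (S / t ^ 2) (a i)
  set B := ∑ i, |b i|
  set σ := √(∑ i, c i ^ 2)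
  set F := √(∑ i, T i ^ 2)
  have hF : F ^ 2 = ∑ i, T i ^ 2 := Real.sq_sqrt (by positivity)
  have hcT : ∑ i, |c i| * |T i| ≤ σ * F := by
    simpa only [sq_abs] using Real.sum_mul_le_sqrt_mul_sqrt Finset.univ (|c ·|) (|T ·|)
  have hT : F ^ 2 ≤ S / t ^ 2 * B + σ * F := by
    calc F ^ 2 ≤ ∑ i, (S / t ^ 2 * |b i| + |c i| * |T i|) :=
          hF ▸ Finset.sum_le_sum fun i _ => by
            simpa only [T, habc i] using sq_truncAt_add_le (by positivity) (b i) (c i)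
      _ = S / t ^ 2 * B + ∑ i, |c i| * |T i| := by rw [Finset.sum_add_distrib, Finset.mul_sum]
      _ ≤ S / t ^ 2 * B + σ * F := by linarith
  -- with `X = tF` this reads `X² ≤ S B + (tσ) X`, and `B + tσ ≤ S` forces `X ≤ S`
  have hX : (t * F) ^ 2 ≤ S * B + (t * σ) * (t * F) := by
    have := mul_le_mul_of_nonneg_left hT (sq_nonneg t)
    field_simp at this ⊢
    linarith
  by_contra! hlt
  have hB : 0 ≤ B := by positivity
  nlinarith [mul_le_mul_of_nonneg_left hlt.le hB, mul_le_mul_of_nonneg_left hS (hS₀.trans hlt).le]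

end FiniteSums

section ScalarKFunctional

variable {N : ℕ} {a : Fin N → ℝ} {t S : ℝ}

lemma K12Fin_nonneg (ht : 0 ≤ t) (a : Fin N → ℝ) : 0 ≤ K12Fin a t := by
  refine Real.sInf_nonneg ?_
  rintro _ ⟨b, c, -, rfl⟩
  positivity

lemma K12Fin_le_of_eq_add (ht : 0 ≤ t) {b c : Fin N → ℝ} (habc : ∀ n, a n = b n + c n) :
    K12Fin a t ≤ ∑ n, |b n| + t * √(∑ n, c n ^ 2) := by
  refine csInf_le ⟨0, ?_⟩ ⟨b, c, habc, by rw [Real.sqrt_eq_rpow]⟩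
  rintro _ ⟨b, c, -, rfl⟩
  positivity

lemma K12Fin_le_sum_abs (ht : 0 ≤ t) (a : Fin N → ℝ) : K12Fin a t ≤ ∑ n, |a n| := by
  simpa using K12Fin_le_of_eq_add (a := a) (c := 0) ht fun n => (add_zero (a n)).symm

lemma exists_eq_add_of_K12Fin_lt (hK : K12Fin a t < S) :
    ∃ b c : Fin N → ℝ, (∀ n, a n = b n + c n) ∧ ∑ n, |b n| + t * √(∑ n, c n ^ 2) < S := by
  obtain ⟨_, ⟨b, c, habc, rfl⟩, hlt⟩ :=
    exists_lt_of_csInf_lt (by exact ⟨_, a, 0, by simp, rfl⟩) hK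
  exact ⟨b, c, habc, by rwa [Real.sqrt_eq_rpow]⟩

lemma truncAt_bounds_of_K12Fin_lt (ht : 0 < t) (hK : K12Fin a t < S) :
    ∑ n, |a n - truncAt (S / t ^ 2) (a n)| ≤ S ∧
      t * √(∑ n, truncAt (S / t ^ 2) (a n) ^ 2) ≤ S := by
  obtain ⟨b, c, habc, hlt⟩ := exists_eq_add_of_K12Fin_lt hK
  have hS₀ : 0 < S := lt_of_le_of_lt (by positivity) hlt
  exact ⟨sum_abs_sub_truncAt_le habc ht hlt.le hS₀, mul_sqrt_sum_sq_truncAt_le habc ht hlt.le hS₀⟩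

end ScalarKFunctional

section WeakNorms

variable {E : Type*} [NormedAddCommGroup E] [NormedSpace ℝ E] {N : ℕ} {t M : ℝ}

instance : Nonempty {f : E →L[ℝ] ℝ // ‖f‖ ≤ 1} := ⟨⟨0, by simp⟩⟩

lemma l1wFin_nonneg (y : Fin N → E) : 0 ≤ l1wFin y :=
  Real.iSup_nonneg fun _ => by positivity

lemma l2wFin_nonneg (z : Fin N → E) : 0 ≤ l2wFin z :=
  Real.iSup_nonneg fun _ => by positivity

lemma KwCouple_le_of_eq_add (ht : 0 ≤ t) {x y z : Fin N → E} (hxyz : ∀ n, x n = y n + z n) :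
    KwCouple x t ≤ l1wFin y + t * l2wFin z := by
  refine csInf_le ⟨0, ?_⟩ ⟨y, z, hxyz, rfl⟩
  rintro _ ⟨y, z, -, rfl⟩
  have := l1wFin_nonneg y
  have := l2wFin_nonneg z
  positivity

lemma l1wFin_le_of_norm_sum_smul_le {y : Fin N → E}
    (h : ∀ ε : Fin N → ℝ, (∀ n, |ε n| ≤ 1) → ‖∑ n, ε n • y n‖ ≤ M) : l1wFin y ≤ M := by
  refine ciSup_le fun ⟨f, hf⟩ => ?_
  set ε : Fin N → ℝ := fun n => SignType.sign (f (y n))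
  have hε : ∀ n, |ε n| ≤ 1 := fun n => by
    rcases lt_trichotomy (f (y n)) 0 with h | h | h <;> simp [ε, h]
  calc ∑ n, |f (y n)| = f (∑ n, ε n • y n) := by
        simp only [map_sum, map_smul, smul_eq_mul, ε, sign_mul_self]
    _ ≤ ‖f‖ * ‖∑ n, ε n • y n‖ := (le_abs_self _).trans (f.le_opNorm _)
    _ ≤ M := by
        have := h ε hε
        nlinarith [norm_nonneg (∑ n, ε n • y n)]

lemma l2wFin_le_of_norm_sum_smul_le (hM : 0 ≤ M) {z : Fin N → E}
    (h : ∀ β : Fin N → ℝ, ‖∑ n, β n • z n‖ ≤ M * √(∑ n, β n ^ 2)) : l2wFin z ≤ M := by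
  refine ciSup_le fun ⟨f, hf⟩ => ?_
  rw [← Real.sqrt_eq_rpow]
  set Q := ∑ n, f (z n) ^ 2
  have hQ : √Q ^ 2 ≤ M * √Q := by
    calc √Q ^ 2 = f (∑ n, f (z n) • z n) := by
          rw [Real.sq_sqrt (by positivity)]
          simp only [map_sum, map_smul, smul_eq_mul, Q, sq]
      _ ≤ ‖f‖ * ‖∑ n, f (z n) • z n‖ := (le_abs_self _).trans (f.le_opNorm _)
      _ ≤ M * √Q := by
          have := h fun n => f (z n)
          nlinarith [norm_nonneg (∑ n, f (z n) • z n)]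
  nlinarith [Real.sqrt_nonneg Q]

lemma K12Fin_le_Kw12Fin (ht : 0 ≤ t) (x : Fin N → E) {f : E →L[ℝ] ℝ} (hf : ‖f‖ ≤ 1) :
    K12Fin (fun n => f (x n)) t ≤ Kw12Fin x t := by
  refine le_ciSup (f := fun f : {f : E →L[ℝ] ℝ // ‖f‖ ≤ 1} => K12Fin (fun n => f.1 (x n)) t)
    ⟨∑ n, ‖x n‖, ?_⟩ ⟨f, hf⟩
  rintro _ ⟨⟨g, hg⟩, rfl⟩
  refine (K12Fin_le_sum_abs ht _).trans (Finset.sum_le_sum fun n _ => ?_)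
  calc |g (x n)| ≤ ‖g‖ * ‖x n‖ := g.le_opNorm (x n)
    _ ≤ ‖x n‖ := mul_le_of_le_one_left (norm_nonneg _) hg

end WeakNorms

section LInfty

variable {α ι : Type*} [Fintype ι] {M : ℝ}

lemma lp.sum_smul_apply (u : ι → lp (fun _ : α => ℝ) ∞) (c : ι → ℝ) (j : α) :
    (∑ i, c i • u i : lp (fun _ : α => ℝ) ∞) j = ∑ i, c i * u i j := by
  rw [lp.coeFn_sum, Finset.sum_apply]
  rfl

lemma lp.norm_sum_smul_le_of_sum_abs_le (hM : 0 ≤ M) {u : ι → lp (fun _ : α => ℝ) ∞}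
    (hu : ∀ j, ∑ i, |u i j| ≤ M) {ε : ι → ℝ} (hε : ∀ i, |ε i| ≤ 1) :
    ‖∑ i, ε i • u i‖ ≤ M := by
  refine lp.norm_le_of_forall_le hM fun j => ?_
  rw [lp.sum_smul_apply, Real.norm_eq_abs]
  refine (Finset.abs_sum_le_sum_abs _ _).trans ((Finset.sum_le_sum fun i _ => ?_).trans (hu j))
  rw [abs_mul]
  exact mul_le_of_le_one_left (abs_nonneg _) (hε i)

lemma lp.norm_sum_smul_le_of_sqrt_sum_sq_le (hM : 0 ≤ M) {u : ι → lp (fun _ : α => ℝ) ∞}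
    (hu : ∀ j, √(∑ i, u i j ^ 2) ≤ M) (β : ι → ℝ) :
    ‖∑ i, β i • u i‖ ≤ M * √(∑ i, β i ^ 2) := by
  refine lp.norm_le_of_forall_le (by positivity) fun j => ?_
  rw [lp.sum_smul_apply, Real.norm_eq_abs, mul_comm]
  calc |∑ i, β i * u i j| ≤ ∑ i, |β i| * |u i j| := by
        simpa only [abs_mul] using Finset.abs_sum_le_sum_abs (fun i => β i * u i j) Finset.univ
    _ ≤ √(∑ i, β i ^ 2) * √(∑ i, u i j ^ 2) := by
        simpa only [sq_abs] using Real.sum_mul_le_sqrt_mul_sqrt Finset.univ (|β ·|) (|u · j|)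
    _ ≤ √(∑ i, β i ^ 2) * M := by gcongr; exact hu j

lemma lp.norm_evalCLM_le (j : α) : ‖lp.evalCLM ℝ (fun _ : α => ℝ) ∞ j‖ ≤ 1 :=
  LinearMap.mkContinuous_norm_le _ zero_le_one _

lemma memℓp_infty_truncAt {lam : ℝ} (hlam : 0 ≤ lam) (u : α → ℝ) :
    Memℓp (fun j => truncAt lam (u j)) ∞ :=
  memℓp_infty ⟨lam, by rintro _ ⟨j, rfl⟩; exact abs_truncAt_le hlam (u j)⟩

end LInfty

theorem KwCouple_le_two_mul_of_forall_K12Fin_lt {α : Type*} [Nonempty α] {N : ℕ}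
    {x : Fin N → lp (fun _ : α => ℝ) ∞} {t S : ℝ} (ht : 0 < t)
    (hS : ∀ j, K12Fin (fun n => x n j) t < S) : KwCouple x t ≤ 2 * S := by
  have hS₀ : 0 ≤ S := (K12Fin_nonneg ht.le _).trans (hS (Classical.arbitrary α)).le
  have hbounds j := truncAt_bounds_of_K12Fin_lt ht (hS j)
  let z n : lp (fun _ : α => ℝ) ∞ :=
    ⟨fun j => truncAt (S / t ^ 2) (x n j), memℓp_infty_truncAt (by positivity) _⟩
  have hy : l1wFin (x - z) ≤ S :=
    l1wFin_le_of_norm_sum_smul_le fun _ => lp.norm_sum_smul_le_of_sum_abs_le hS₀ fun j => by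
      simpa only [z, Pi.sub_apply, lp.coeFn_sub] using (hbounds j).1
  have hz : l2wFin z ≤ S / t :=
    l2wFin_le_of_norm_sum_smul_le (by positivity) <| lp.norm_sum_smul_le_of_sqrt_sum_sq_le
      (by positivity) fun j => (le_div_iff₀' ht).2 (hbounds j).2
  calc KwCouple x t ≤ l1wFin (x - z) + t * l2wFin z :=
        KwCouple_le_of_eq_add ht.le fun n => (sub_add_cancel _ _).symm
    _ ≤ S + t * (S / t) := by gcongr
    _ = 2 * S := by field_simp; ring

theorem stmt13 {N : ℕ} (x : Fin N → lp (fun _ : ℕ => ℝ) ∞) (t : ℝ) (ht : 0 < t) :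
    KwCouple x t ≤ 2 * Kw12Fin x t := by
  have key : ∀ S > Kw12Fin x t, KwCouple x t / 2 ≤ S := fun S hS => by
    have := KwCouple_le_two_mul_of_forall_K12Fin_lt ht fun j =>
      (K12Fin_le_Kw12Fin ht.le x (lp.norm_evalCLM_le j)).trans_lt hS
    linarith
  linarith [le_of_forall_gt_imp_ge_of_dense key]
end
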